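/- Let Λ: (Z/2)^m → (Z/2)^n be a characteristic function over a simplicial complex K, ω ∈ row Λ, and for each oriented face σ ∈ K_ω define f_{σ,ω} = Σ_{ω'⊆ω∖σ} (−2)^{|ω'|} u_σ t_{ω'} ∈ R_K. Then for every g ∈ ker Λ, the action φ_g fixes f_{σ,ω}, i.e., f_{σ,ω} lies in the ker Λ-invariant submodule R(K,Λ). -/

import Mathlib

open Finset

noncomputable section

abbrev FA (m : ℕ) := FreeAlgebra ℤ (Fin m ⊕ Fin m)

def uf (m : ℕ) (i : Fin m) : FA m := FreeAlgebra.ι ℤ (Sum.inl i)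
def tf (m : ℕ) (i : Fin m) : FA m := FreeAlgebra.ι ℤ (Sum.inr i)

/-- `u_σ` in the free algebra (product in increasing order). -/
def ufProd (m : ℕ) (σ : Finset (Fin m)) : FA m :=
  ((σ.sort (· ≤ ·)).map (uf m)).prod

/-- The defining relations of the DGA `R_K`: the relations of `R` together with
`u_σ = 0` for non-faces `σ ∉ K`. -/
inductive RKRel (m : ℕ) (K : Finset (Fin m) → Prop) : FA m → FA m → Prop
  | ut_same (i : Fin m) : RKRel m K (uf m i * tf m i) (uf m i)
  | tu_same (i : Fin m) : RKRel m K (tf m i * uf m i) 0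
  | ut_comm {i j : Fin m} (h : i ≠ j) : RKRel m K (uf m i * tf m j) (tf m j * uf m i)
  | tt_same (i : Fin m) : RKRel m K (tf m i * tf m i) (tf m i)
  | uu_same (i : Fin m) : RKRel m K (uf m i * uf m i) 0
  | uu_anti {i j : Fin m} (h : i ≠ j) : RKRel m K (uf m i * uf m j) (-(uf m j * uf m i))
  | tt_comm (i j : Fin m) : RKRel m K (tf m i * tf m j) (tf m j * tf m i)
  | notface (σ : Finset (Fin m)) (h : ¬ K σ) : RKRel m K (ufProd m σ) 0

/-- The DGA `R_K` (as a ring). -/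
abbrev RK (m : ℕ) (K : Finset (Fin m) → Prop) := RingQuot (RKRel m K)

def uqK (m : ℕ) (K : Finset (Fin m) → Prop) (i : Fin m) : RK m K :=
  RingQuot.mkRingHom (RKRel m K) (uf m i)
def tqK (m : ℕ) (K : Finset (Fin m) → Prop) (i : Fin m) : RK m K :=
  RingQuot.mkRingHom (RKRel m K) (tf m i)

def uProdK (m : ℕ) (K : Finset (Fin m) → Prop) (σ : Finset (Fin m)) : RK m K :=
  ((σ.sort (· ≤ ·)).map (uqK m K)).prod
def tProdK (m : ℕ) (K : Finset (Fin m) → Prop) (τ : Finset (Fin m)) : RK m K :=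
  ((τ.sort (· ≤ ·)).map (tqK m K)).prod

/-- `f_{σ,ω} = Σ_{ω' ⊆ ω∖σ} (−2)^{|ω'|} u_σ t_{ω'} ∈ R_K`. -/
def fEl (m : ℕ) (K : Finset (Fin m) → Prop) (σ ω : Finset (Fin m)) : RK m K :=
  ∑ ω' ∈ (ω \ σ).powerset, (-2 : ℤ) ^ ω'.card • (uProdK m K σ * tProdK m K ω')

/-- The product `Π_{i∈ω'} t'_i` where `t'_i = t_i` if `i ∉ g` and `t'_i = 1 − t_i` if
`i ∈ g` (product in increasing order). -/
def tPrimeProd (m : ℕ) (K : Finset (Fin m) → Prop) [DecidableEq (Fin m)]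
    (g : Finset (Fin m)) (ω' : Finset (Fin m)) : RK m K :=
  ((ω'.sort (· ≤ ·)).map (fun i => if i ∈ g then 1 - tqK m K i else tqK m K i)).prod

/-- The indicator vector of a finite set of indices. -/
def indVec (m : ℕ) (A : Finset (Fin m)) : Fin m → ZMod 2 :=
  fun i => if i ∈ A then 1 else 0

/-! The `t_i` generate a commutative subring, in which
`Σ_{ω' ⊆ S} (-2)^{|ω'|} t_{ω'} = Π_{i ∈ S} (1 - 2 t_i)`. Replacing `t_i` by `1 - t_i` negates
the factor `1 - 2 t_i`, so `φ_g` multiplies `f_{σ,ω}` by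
`(-1)^{|g ∩ σ| + |g ∩ (ω ∖ σ)|} = (-1)^{|g ∩ ω|}`. Finally `|g ∩ ω| ≡ ⟨ω, g⟩ = ⟨c, Λ g⟩ = 0`
mod 2 when `ω = c Λ` lies in the row space and `g ∈ ker Λ`. -/

section SortedProduct

variable {ι M N F : Type*} [LinearOrder ι] [CommMonoid M] [Monoid N] [FunLike F M N]
  [MonoidHomClass F M N]

theorem map_prod_eq_prod_map_sort (φ : F) (f : ι → M) (s : Finset ι) :
    φ (∏ i ∈ s, f i) = ((s.sort (· ≤ ·)).map fun i => φ (f i)).prod := by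
  rw [Finset.prod_eq_multiset_prod, ← s.sort_eq (· ≤ ·), Multiset.map_coe, Multiset.prod_coe,
    map_list_prod, List.map_map]
  rfl

end SortedProduct

section CommRing

variable {ι R : Type*} [CommRing R]

theorem sum_powerset_neg_two_pow_zsmul_prod (t : ι → R) (s : Finset ι) :
    ∑ T ∈ s.powerset, (-2 : ℤ) ^ #T • ∏ i ∈ T, t i = ∏ i ∈ s, (1 - 2 * t i) := by
  simp_rw [sub_eq_add_neg, ← neg_mul, prod_one_add, prod_mul_distrib, prod_const, zsmul_eq_mul]
  push_cast
  rfl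

theorem prod_one_sub_two_mul_ite_one_sub [DecidableEq ι] (t : ι → R) (g s : Finset ι) :
    ∏ i ∈ s, (1 - 2 * if i ∈ g then 1 - t i else t i) =
      (-1) ^ #(g ∩ s) * ∏ i ∈ s, (1 - 2 * t i) := by
  have hfactor : ∀ i, (1 - 2 * if i ∈ g then 1 - t i else t i) =
      (if i ∈ g then -1 else 1) * (1 - 2 * t i) := by
    intro i
    split_ifs <;> ring
  rw [prod_congr rfl fun i _ => hfactor i, prod_mul_distrib, prod_ite_mem, prod_const,
    inter_comm]

/-- Replacing `t_i` by `1 - t_i` for `i ∈ g` changes each factor `1 - 2 t_i` into its negative. -/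
theorem sum_powerset_zsmul_prod_ite_one_sub [DecidableEq ι] (t : ι → R) (g s : Finset ι) :
    ∑ T ∈ s.powerset, (-2 : ℤ) ^ #T • ∏ i ∈ T, (if i ∈ g then 1 - t i else t i) =
      (-1 : ℤ) ^ #(g ∩ s) • ∑ T ∈ s.powerset, (-2 : ℤ) ^ #T • ∏ i ∈ T, t i := by
  rw [sum_powerset_neg_two_pow_zsmul_prod, sum_powerset_neg_two_pow_zsmul_prod,
    prod_one_sub_two_mul_ite_one_sub, zsmul_eq_mul]
  push_cast
  rfl

end CommRing

open Matrix in
theorem indVec_dotProduct_indVec (m : ℕ) (A B : Finset (Fin m)) :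
    indVec m A ⬝ᵥ indVec m B = #(A ∩ B) := by
  simp only [indVec, dotProduct, mul_ite, mul_one, mul_zero, ← ite_and, sum_boole]
  congr 2
  ext
  simp [and_comm]

open Matrix in
theorem even_card_inter_of_mem_ker_of_mem_row {m n : ℕ}
    (Λ : (Fin m → ZMod 2) →ₗ[ZMod 2] (Fin n → ZMod 2)) {g ω : Finset (Fin m)}
    (hg : Λ (indVec m g) = 0)
    (hω : ∃ c : Fin n → ZMod 2, ∀ i, indVec m ω i = ∑ j, c j * Λ (Pi.single i 1) j) :
    Even #(g ∩ ω) := by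
  obtain ⟨c, hc⟩ := hω
  have hrow : indVec m ω = c ᵥ* LinearMap.toMatrix' Λ := by
    ext i
    simp [hc, Matrix.vecMul, dotProduct, LinearMap.toMatrix'_apply]
  rw [← ZMod.natCast_eq_zero_iff_even]
  calc (#(g ∩ ω) : ZMod 2) = indVec m ω ⬝ᵥ indVec m g := by
        rw [indVec_dotProduct_indVec, inter_comm]
    _ = c ⬝ᵥ (LinearMap.toMatrix' Λ *ᵥ indVec m g) := by rw [hrow, Matrix.dotProduct_mulVec]
    _ = 0 := by rw [LinearMap.toMatrix'_mulVec, hg, dotProduct_zero]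

section TSubring

variable {m : ℕ} {K : Finset (Fin m) → Prop}

theorem tqK_mul_comm (i j : Fin m) : tqK m K i * tqK m K j = tqK m K j * tqK m K i := by
  have h := RingQuot.mkRingHom_rel (RKRel.tt_comm (K := K) i j)
  rwa [map_mul, map_mul] at h

variable (m K) in
/-- The `t_i` commute, so in the subring they generate the sorted products `tProdK` and
`tPrimeProd` become ordinary `Finset.prod`s. -/
def tSubring : Subring (RK m K) := Subring.closure (Set.range (tqK m K))

open scoped IsMulCommutative in
instance : CommRing (tSubring m K) :=
  have : IsMulCommutative (tSubring m K) := Subring.isMulCommutative_closure <| by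
    rintro _ ⟨i, rfl⟩ _ ⟨j, rfl⟩
    exact tqK_mul_comm i j
  inferInstance

def tGen (i : Fin m) : tSubring m K := ⟨tqK m K i, Subring.subset_closure ⟨i, rfl⟩⟩

theorem tProdK_eq_coe_prod (τ : Finset (Fin m)) :
    tProdK m K τ = ((∏ i ∈ τ, tGen i : tSubring m K) : RK m K) := by
  rw [tProdK, ← Subring.coe_subtype, map_prod_eq_prod_map_sort]
  rfl

theorem tPrimeProd_eq_coe_prod (g τ : Finset (Fin m)) :
    tPrimeProd m K g τ =
      ((∏ i ∈ τ, if i ∈ g then 1 - tGen i else tGen i : tSubring m K) : RK m K) := by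
  rw [tPrimeProd, ← Subring.coe_subtype, map_prod_eq_prod_map_sort]
  congr 2
  ext i
  split_ifs <;> rfl

end TSubring

theorem fEl_invariant_general (m n : ℕ)
    (K : Finset (Fin m) → Prop)
    (Λ : (Fin m → ZMod 2) →ₗ[ZMod 2] (Fin n → ZMod 2))
    (g : Finset (Fin m)) (hg : Λ (indVec m g) = 0)
    (ω : Finset (Fin m))
    (hω : ∃ c : Fin n → ZMod 2, ∀ i, indVec m ω i = ∑ j, c j * Λ (Pi.single i 1) j)
    (σ : Finset (Fin m)) (hσω : σ ⊆ ω) :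
    ∑ ω' ∈ (ω \ σ).powerset,
        (-2 : ℤ) ^ ω'.card •
          ((-1 : ℤ) ^ (g ∩ σ).card • (uProdK m K σ * tPrimeProd m K g ω')) =
      fEl m K σ ω := by
  have hsign : (-1 : ℤ) ^ #(g ∩ σ) * (-1) ^ #(g ∩ (ω \ σ)) = 1 := by
    rw [← pow_add, ← card_union_of_disjoint (disjoint_sdiff.mono inter_subset_right
      inter_subset_right), ← inter_union_distrib_left, union_sdiff_of_subset hσω,
      (even_card_inter_of_mem_ker_of_mem_row Λ hg hω).neg_one_pow]
  have hC : (-1 : ℤ) ^ #(g ∩ σ) • ∑ T ∈ (ω \ σ).powerset,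
        (-2 : ℤ) ^ #T • ∏ i ∈ T, (if i ∈ g then 1 - tGen i else tGen i : tSubring m K) =
      ∑ T ∈ (ω \ σ).powerset, (-2 : ℤ) ^ #T • ∏ i ∈ T, tGen i := by
    rw [sum_powerset_zsmul_prod_ite_one_sub, smul_smul, hsign, one_smul]
  have hR := congrArg (fun x => uProdK m K σ * (tSubring m K).subtype x) hC
  simp only [map_sum, map_zsmul, mul_sum, smul_sum, mul_smul_comm, Subring.coe_subtype] at hR
  simp_rw [fEl, tPrimeProd_eq_coe_prod, tProdK_eq_coe_prod, smul_comm _ ((-1 : ℤ) ^ _)]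
  exact hR

/-- Lemma 3.3, first part: for a characteristic function `Λ` over `K`,
`g ∈ ker Λ` and `ω ∈ row Λ`, the element `f_{σ,ω}` is fixed by the action `φ_g`.  The
action on the monomial `u_σ t_{ω'}` is `(−1)^{|g∩σ|} u_σ Π_{i∈ω'} t'_i`, so invariance
reads: `Σ_{ω'⊆ω∖σ} (−2)^{|ω'|} (−1)^{|g∩σ|} u_σ Π t'_i = f_{σ,ω}`. -/
theorem fEl_invariant (m n : ℕ)
    (K : Finset (Fin m) → Prop)
    (hK : ∀ σ τ, K σ → τ ⊆ σ → K τ)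
    (Λ : (Fin m → ZMod 2) →ₗ[ZMod 2] (Fin n → ZMod 2))
    (hsurj : Function.Surjective Λ)
    (hchar : ∀ σ : Finset (Fin m), K σ →
      LinearIndependent (ZMod 2) (fun i : σ => Λ (Pi.single (i : Fin m) 1)))
    (g : Finset (Fin m)) (hg : Λ (indVec m g) = 0)
    (ω : Finset (Fin m))
    (hω : ∃ c : Fin n → ZMod 2, ∀ i, indVec m ω i = ∑ j, c j * Λ (Pi.single i 1) j)
    (σ : Finset (Fin m)) (hσ : K σ) (hσω : σ ⊆ ω) :
    ∑ ω' ∈ (ω \ σ).powerset,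
        (-2 : ℤ) ^ ω'.card •
          ((-1 : ℤ) ^ (g ∩ σ).card • (uProdK m K σ * tPrimeProd m K g ω')) =
      fEl m K σ ω :=
  fEl_invariant_general m n K Λ g hg ω hω σ hσω

end
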